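/- arXiv:1910.02198 — 3 statements merged into one kernel-verified Lean document; each statement's English description precedes it below -/
import Mathlib

section
/- Let q ∈ ℂ* and let A, B be n×n complex matrices with AB = qBA. If A is invertible and b is a nonzero eigenvalue of B, then b·q^(−i) is an eigenvalue of B for every i ≥ 0. -/
theorem stmt_1 (n : ℕ) (q : ℂ) (hq : q ≠ 0) (A B : Matrix (Fin n) (Fin n) ℂ)
    (hcomm : A * B = q • (B * A)) (hA : IsUnit A) (b : ℂ) (hb : b ≠ 0)
    (hev : ∃ v : Fin n → ℂ, v ≠ 0 ∧ B.mulVec v = b • v) :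
    ∀ i : ℕ, ∃ v : Fin n → ℂ, v ≠ 0 ∧ B.mulVec v = (b * q⁻¹ ^ i) • v := by
  have hinj : Function.Injective A.mulVec :=
    Matrix.mulVec_injective_iff_isUnit.2 hA
  have hBA : B * A = q⁻¹ • (A * B) := by
    rw [hcomm, smul_smul, inv_mul_cancel₀ hq, one_smul]
  intro i
  induction i with
  | zero => simpa using hev
  | succ i ih =>
    obtain ⟨v, hv, hBv⟩ := ih
    refine ⟨A.mulVec v, fun h => hv ?_, ?_⟩
    · exact hinj (by simpa using h)
    · calc B.mulVec (A.mulVec v) = (B * A).mulVec v := by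
            rw [Matrix.mulVec_mulVec]
        _ = q⁻¹ • (A * B).mulVec v := by rw [hBA, Matrix.smul_mulVec]
        _ = q⁻¹ • A.mulVec (B.mulVec v) := by rw [Matrix.mulVec_mulVec]
        _ = (b * q⁻¹ ^ (i + 1)) • A.mulVec v := by
            rw [hBv, Matrix.mulVec_smul, smul_smul, pow_succ]; ring_nf
end

section
/- Let q ∈ ℂ* not be a root of unity, and let A, B be n×n complex matrices with AB = qBA and A invertible. Then B is nilpotent. -/
open Polynomial Matrix

lemma eval_charpoly' {m : ℕ} (M : Matrix (Fin m) (Fin m) ℂ) (x : ℂ) :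
    (M.charpoly).eval x = (x • (1 : Matrix (Fin m) (Fin m) ℂ) - M).det := by
  rw [Matrix.charpoly, _root_.eval_det, matPolyEquiv_charmatrix]
  congr 1
  simp [Matrix.scalar, smul_eq_diagonal_mul]

theorem stmt_9 (n : ℕ) (q : ℂ) (hq : q ≠ 0) (hroot : ∀ k : ℕ, 0 < k → q ^ k ≠ 1)
    (A B : Matrix (Fin n) (Fin n) ℂ) (hcomm : A * B = q • (B * A)) (hA : IsUnit A) :
    IsNilpotent B := by
  have hd : IsUnit A.det := (Matrix.isUnit_iff_isUnit_det A).mp hA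
  set p := B.charpoly with hp
  have hdeg : p.natDegree = n := by
    rw [hp, Matrix.charpoly_natDegree_eq_dim, Fintype.card_fin]
  have hc : q • B = A * B * A⁻¹ := by
    rw [hcomm, Matrix.smul_mul, Matrix.mul_assoc, Matrix.mul_nonsing_inv A hd, Matrix.mul_one]
  have hsim : ∀ x : ℂ, (x • (1 : Matrix (Fin n) (Fin n) ℂ) - q • B).det
      = (x • (1 : Matrix (Fin n) (Fin n) ℂ) - B).det := by
    intro x
    have h1 : x • (1 : Matrix (Fin n) (Fin n) ℂ) - q • B
        = A * (x • (1 : Matrix (Fin n) (Fin n) ℂ) - B) * A⁻¹ := by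
      rw [hc, Matrix.mul_sub, Matrix.sub_mul]
      congr 1
      rw [Matrix.mul_smul, Matrix.mul_one, Matrix.smul_mul, Matrix.mul_nonsing_inv A hd]
    rw [h1, Matrix.det_mul, Matrix.det_mul, mul_comm, ← mul_assoc,
      ← Matrix.det_mul, Matrix.nonsing_inv_mul A hd, Matrix.det_one, one_mul]
  have key : ∀ x : ℂ, p.eval (q * x) = q ^ n * p.eval x := by
    intro x
    rw [eval_charpoly', eval_charpoly', ← hsim (q * x)]
    rw [show (q * x) • (1 : Matrix (Fin n) (Fin n) ℂ) - q • B
        = q • (x • (1 : Matrix (Fin n) (Fin n) ℂ) - B) by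
      rw [smul_sub, smul_smul]]
    rw [Matrix.det_smul]
    simp
  have hs : p.scaleRoots q = p := by
    apply Polynomial.funext
    intro y
    have hy : y = q * (q⁻¹ * y) := by field_simp
    rw [hy]
    have := Polynomial.scaleRoots_eval₂_mul (p := p) (RingHom.id ℂ) (q⁻¹ * y) q
    simp only [RingHom.id_apply] at this
    show eval₂ (RingHom.id ℂ) _ _ = eval₂ (RingHom.id ℂ) _ _
    rw [this, hdeg]
    exact (key (q⁻¹ * y)).symm
  have hcoeff : ∀ i, i < n → p.coeff i = 0 := by
    intro i hi
    have h1 : p.coeff i * q ^ (n - i) = p.coeff i := by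
      conv_rhs => rw [← hs]
      rw [Polynomial.coeff_scaleRoots, hdeg]
    have h2 : p.coeff i * (q ^ (n - i) - 1) = 0 := by ring_nf; linear_combination h1
    rcases mul_eq_zero.mp h2 with h | h
    · exact h
    · exact absurd (sub_eq_zero.mp h) (hroot (n - i) (Nat.sub_pos_of_lt hi))
  have hXn : p = X ^ n := by
    ext i
    rw [Polynomial.coeff_X_pow]
    by_cases hin : i = n
    · subst hin
      simp only [if_pos rfl]
      have := (Matrix.charpoly_monic B).coeff_natDegree
      rwa [← hp, hdeg] at this
    · rw [if_neg hin]
      rcases lt_or_gt_of_ne hin with h | h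
      · exact hcoeff i h
      · exact Polynomial.coeff_eq_zero_of_natDegree_lt (by omega)
  refine ⟨n, ?_⟩
  have h := B.aeval_self_charpoly
  rw [← hp, hXn] at h
  simpa using h
end

section
/- Let q be a primitive ℓ-th root of unity with n < ℓ, and let A, B be n×n complex matrices with AB = qBA and A invertible. Then B is nilpotent. -/
open Polynomial Matrix

lemma eval_charpoly_aux {n : ℕ} (M : Matrix (Fin n) (Fin n) ℂ) (μ : ℂ) :
    (M.charpoly).eval μ = (μ • (1 : Matrix (Fin n) (Fin n) ℂ) - M).det := by
  rw [Matrix.charpoly, ← Polynomial.coe_evalRingHom, RingHom.map_det]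
  congr 1
  ext i j
  by_cases h : i = j <;>
    simp [h, Matrix.charmatrix_apply, Matrix.sub_apply, Matrix.one_apply,
      Matrix.diagonal_apply, Matrix.smul_apply]

theorem stmt_10 (n ℓ : ℕ) (hn : n < ℓ) (q : ℂ) (hq : IsPrimitiveRoot q ℓ)
    (A B : Matrix (Fin n) (Fin n) ℂ) (hcomm : A * B = q • (B * A)) (hA : IsUnit A) :
    IsNilpotent B := by
  have hℓ : ℓ ≠ 0 := by omega
  have hdetA : A.det ≠ 0 := by
    have := (Matrix.isUnit_iff_isUnit_det A).mp hA
    exact this.ne_zero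
  set p := B.charpoly with hp
  -- key multiplicative relation on eval
  have key : ∀ μ : ℂ, p.eval (q * μ) = q ^ n * p.eval μ := by
    intro μ
    have h1 : A * ((q * μ) • (1 : Matrix (Fin n) (Fin n) ℂ) - B)
        = (q • (μ • (1 : Matrix (Fin n) (Fin n) ℂ) - B)) * A := by
      rw [Matrix.mul_sub, Matrix.smul_mul, Matrix.sub_mul, Matrix.smul_mul,
        Matrix.one_mul, hcomm]
      rw [smul_sub, smul_smul]
      congr 1
      rw [mul_smul_comm, Matrix.mul_one]
    have h2 := congrArg Matrix.det h1
    rw [Matrix.det_mul, Matrix.det_mul, Matrix.det_smul] at h2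
    simp only [Fintype.card_fin] at h2
    have h3 : ((q * μ) • (1 : Matrix (Fin n) (Fin n) ℂ) - B).det
        = q ^ n * (μ • (1 : Matrix (Fin n) (Fin n) ℂ) - B).det := by
      apply mul_right_cancel₀ hdetA
      rw [mul_comm _ A.det, h2]
    rw [eval_charpoly_aux, eval_charpoly_aux, h3]
  -- all roots of p are zero
  have hroots : ∀ μ : ℂ, p.eval μ = 0 → μ = 0 := by
    intro μ hμ
    by_contra hμ0
    have horb : ∀ k : ℕ, p.eval (q ^ k * μ) = 0 := by
      intro k
      induction k with
      | zero => simpa using hμ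
      | succ k ih =>
        rw [pow_succ, mul_comm (q ^ k) q, mul_assoc, key, ih, mul_zero]
    have hpne : p ≠ 0 := B.charpoly_monic.ne_zero
    set S : Finset ℂ := (Finset.range ℓ).image (fun k => q ^ k * μ) with hS
    have hcard : S.card = ℓ := by
      rw [hS, Finset.card_image_of_injOn, Finset.card_range]
      intro i hi j hj hij
      simp only [Finset.mem_coe, Finset.mem_range] at hi hj
      exact hq.pow_inj hi hj (mul_right_cancel₀ hμ0 hij)
    have hsub : S ⊆ p.roots.toFinset := by
      intro x hx
      rw [hS] at hx
      obtain ⟨k, -, rfl⟩ := Finset.mem_image.mp hx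
      rw [Multiset.mem_toFinset, Polynomial.mem_roots hpne]
      exact horb k
    have hle : ℓ ≤ n := by
      calc ℓ = S.card := hcard.symm
        _ ≤ p.roots.toFinset.card := Finset.card_le_card hsub
        _ ≤ Multiset.card p.roots := p.roots.toFinset_card_le
        _ ≤ p.natDegree := p.card_roots'
        _ = n := by rw [hp, Matrix.charpoly_natDegree_eq_dim, Fintype.card_fin]
    omega
  -- hence p = X ^ n
  have hsplit : p.Splits := IsAlgClosed.splits p
  have hdeg : Multiset.card p.roots = n := by
    rw [Polynomial.splits_iff_card_roots.mp hsplit, hp,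
      Matrix.charpoly_natDegree_eq_dim, Fintype.card_fin]
  have hrepl : p.roots = Multiset.replicate n (0 : ℂ) := by
    rw [Multiset.eq_replicate]
    refine ⟨hdeg, fun x hx => ?_⟩
    exact hroots x ((Polynomial.mem_roots B.charpoly_monic.ne_zero).mp hx)
  have hpX : p = X ^ n := by
    have := Polynomial.Splits.eq_prod_roots_of_monic (f := B.charpoly) hsplit B.charpoly_monic
    rw [← hp, hrepl] at this
    simpa [Multiset.map_replicate, Multiset.prod_replicate] using this
  refine ⟨n, ?_⟩
  have := B.aeval_self_charpoly
  rw [← hp, hpX] at this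
  simpa using this
end
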